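/- arXiv:2101.02676 — 3 statements merged into one kernel-verified Lean document; each statement's English description precedes it below -/
import Mathlib

section
/- Let I^{(1)}_{M→2M} : ℂ^M → ℂ^{2M} be defined on the orthonormal basis e_M^m = √M δ^m by I^{(1)}_{M→2M} e_M^m = e_{2M}^{2m}. Then the discretised operators Û_M (multiplication by e^{2πim/M}) and T̂_M(l) (cyclic shift by Ml positions, l = k/M) are strongly cylindrically consistent: Û_{2M} I^{(1)}_{M→2M} = I^{(1)}_{M→2M} Û_M and T̂_{2M}(l) I^{(1)}_{M→2M} = I^{(1)}_{M→2M} T̂_M(l). -/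
/-- The orthonormal basis vector e_M^m = √M δ^m of ℂ^M. -/
noncomputable def eVec (M : ℕ) (m : ZMod M) : ZMod M → ℂ :=
  fun a => if a = m then (Real.sqrt M : ℂ) else 0

/-- The embedding I^{(1)}_{M→2M} : ℂ^M → ℂ^{2M}, determined on the ONB by
e_M^m ↦ e_{2M}^{2m}; on functions: (I f)(n) = √2·f(n/2) for even n, 0 for odd n. -/
noncomputable def embed1 (M : ℕ) (f : ZMod M → ℂ) : ZMod (2 * M) → ℂ :=
  fun n => if n.val % 2 = 0 then (Real.sqrt 2 : ℂ) * f ((n.val / 2 : ℕ) : ZMod M) else 0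

/-!
Û_M is multiplication by the additive character `ZMod.toCircle` of `ZMod M`. On a natural-number
representative `v` of a class in `ZMod (2 * M)`, `embed1` only looks at the parity of `v` and at
`v / 2` modulo `M`; an even `v = 2 * j` has phase `exp (2πi·2j/2M) = exp (2πi·j/M)`, and a shift by
`2 * k` shifts `v / 2` by `k`.
-/

open Complex ZMod

theorem embed1_natCast (M : ℕ) (f : ZMod M → ℂ) (v : ℕ) :
    embed1 M f v = if v % 2 = 0 then (Real.sqrt 2 : ℂ) * f (v / 2 : ℕ) else 0 := by
  simp only [embed1, val_natCast, Nat.mod_mod_of_dvd _ (dvd_mul_right 2 M),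
    Nat.mod_mul_right_div_self, natCast_mod]

theorem embed1_add_two_mul (M : ℕ) [NeZero M] (f : ZMod M → ℂ) (k : ℕ) (n : ZMod (2 * M)) :
    embed1 M f (n + ((2 * k : ℕ) : ZMod (2 * M))) = embed1 M (fun m => f (m + k)) n := by
  rw [← natCast_zmod_val n, ← Nat.cast_add, embed1_natCast, embed1_natCast,
    Nat.add_mul_mod_self_left, Nat.add_mul_div_left _ _ two_pos, Nat.cast_add]

theorem toCircle_mul_embed1 (M : ℕ) [NeZero M] (f : ZMod M → ℂ) (n : ZMod (2 * M)) :
    (toCircle n : ℂ) * embed1 M f n = embed1 M (fun m => (toCircle m : ℂ) * f m) n := by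
  rw [← natCast_zmod_val n, embed1_natCast, embed1_natCast, toCircle_natCast]
  split_ifs with heven
  · obtain ⟨j, hj⟩ := Nat.dvd_of_mod_eq_zero heven
    rw [hj, Nat.mul_div_cancel_left _ two_pos, toCircle_natCast]
    push_cast
    field_simp
  · simp

theorem stmt7_general (M : ℕ) [NeZero M] (k : ℕ)
    :
    (∀ f : ZMod M → ℂ,
      (fun n : ZMod (2 * M) =>
          Complex.exp (2 * Real.pi * Complex.I * n.val / (2 * M)) * embed1 M f n) =
        embed1 M (fun m => Complex.exp (2 * Real.pi * Complex.I * m.val / M) * f m)) ∧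
    (∀ f : ZMod M → ℂ,
      (fun n : ZMod (2 * M) => embed1 M f (n + ((2 * k : ℕ) : ZMod (2 * M)))) =
        embed1 M (fun m => f (m + (k : ZMod M)))) := by
  refine ⟨fun f => funext fun n => ?_, fun f => funext (embed1_add_two_mul M f k)⟩
  simpa [toCircle_apply] using toCircle_mul_embed1 M f n

/-- With respect to I^{(1)}_{M→2M} (e_M^m ↦ e_{2M}^{2m}), the
discretised operators Û_M (multiplication by e^{2πim/M}) and T̂_M(l) (cyclic
shift by Ml = k positions, resp. 2Ml = 2k at level 2M) are strongly
cylindrically consistent. -/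
theorem stmt7 (M : ℕ) [NeZero M] (k : ℕ) (hk : k < M)
    :
    (∀ f : ZMod M → ℂ,
      (fun n : ZMod (2 * M) =>
          Complex.exp (2 * Real.pi * Complex.I * n.val / (2 * M)) * embed1 M f n) =
        embed1 M (fun m => Complex.exp (2 * Real.pi * Complex.I * m.val / M) * f m)) ∧
    (∀ f : ZMod M → ℂ,
      (fun n : ZMod (2 * M) => embed1 M f (n + ((2 * k : ℕ) : ZMod (2 * M)))) =
        embed1 M (fun m => f (m + (k : ZMod M)))) :=
  stmt7_general M k
end

section
/- Let I^{(2)}_{M→2M} : ℂ^M → ℂ^{2M} be defined by I^{(2)}_{M→2M} e_M^m = (e_{2M}^{2m} + e_{2M}^{2m+1})/√2. Then I^{(2)}_{M→2M} is an isometry, and the cyclic shift operators T̂_M(l), l = k/M, are strongly cylindrically consistent with respect to it: T̂_{2M}(l) I^{(2)}_{M→2M} = I^{(2)}_{M→2M} T̂_M(l). -/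
/-- The embedding I^{(2)}_{M→2M} : ℂ^M → ℂ^{2M}, determined on the ONB by
e_M^m ↦ (e_{2M}^{2m} + e_{2M}^{2m+1})/√2; on functions: (I f)(n) = f(⌊n/2⌋). -/
def embed2 (M : ℕ) (f : ZMod M → ℂ) : ZMod (2 * M) → ℂ :=
  fun n => f ((n.val / 2 : ℕ) : ZMod M)

/-!
Since `(I f) n = f ⌊n/2⌋`, each value of `f` is repeated on the two sites `2m, 2m+1`, so the
sum over `ℤ/2M` of `conj (I f) * I g` is twice the sum over `ℤ/M`, which the normalisations
`1/(2M)` and `1/M` compensate. Shifting `n` by `2k` shifts `⌊n/2⌋` by `k`, and reducing mod `2M`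
commutes with halving because `2 ∣ 2M`.
-/

open Finset

lemma ZMod.sum_eq_sum_range {α : Type*} [AddCommMonoid α] {N : ℕ} [NeZero N] (G : ZMod N → α) :
    ∑ n : ZMod N, G n = ∑ i ∈ range N, G i :=
  sum_nbij' ZMod.val (↑) (fun n _ => mem_range.mpr n.val_lt) (fun _ _ => mem_univ _)
    (fun n _ => n.natCast_zmod_val) (fun _ hi => ZMod.val_cast_of_lt (mem_range.mp hi))
    (fun n _ => by rw [n.natCast_zmod_val])

lemma Finset.sum_range_two_mul_comp_div_two {α : Type*} [AddCommMonoid α] (M : ℕ) (h : ℕ → α) :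
    ∑ i ∈ range (2 * M), h (i / 2) = 2 • ∑ j ∈ range M, h j := by
  induction M with
  | zero => simp
  | succ M ih =>
    rw [show 2 * (M + 1) = 2 * M + 1 + 1 by ring, sum_range_succ, sum_range_succ, ih,
      sum_range_succ, show (2 * M + 1) / 2 = M by omega, show 2 * M / 2 = M by omega, two_nsmul,
      two_nsmul]
    abel

lemma ZMod.sum_comp_val_div_two {α : Type*} [AddCommMonoid α] (M : ℕ) [NeZero M]
    (G : ZMod M → α) : ∑ n : ZMod (2 * M), G (n.val / 2 : ℕ) = 2 • ∑ m, G m := by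
  rw [ZMod.sum_eq_sum_range, ZMod.sum_eq_sum_range, ← sum_range_two_mul_comp_div_two]
  refine sum_congr rfl fun i hi => ?_
  rw [ZMod.val_cast_of_lt (mem_range.mp hi)]

lemma ZMod.val_add_two_mul_div_two (M : ℕ) [NeZero M] (n : ZMod (2 * M)) (k : ℕ) :
    (((n + ((2 * k : ℕ) : ZMod (2 * M))).val / 2 : ℕ) : ZMod M) = (n.val / 2 : ℕ) + k := by
  have hval : (n + ((2 * k : ℕ) : ZMod (2 * M))).val = (n.val + 2 * k) % (2 * M) := by
    rw [ZMod.val_add, ZMod.val_natCast, Nat.add_mod_mod]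
  rw [hval, Nat.mod_mul_right_div_self, ZMod.natCast_mod,
    show (n.val + 2 * k) / 2 = n.val / 2 + k by omega, Nat.cast_add]

theorem embed2_inner (M : ℕ) [NeZero M] (f g : ZMod M → ℂ) :
    (1 / ((2 * M : ℕ) : ℂ)) * ∑ n : ZMod (2 * M), (starRingEnd ℂ) (embed2 M f n) * embed2 M g n =
      (1 / (M : ℂ)) * ∑ m : ZMod M, (starRingEnd ℂ) (f m) * g m := by
  have hM : (M : ℂ) ≠ 0 := Nat.cast_ne_zero.mpr (NeZero.ne M)
  have hsum : ∑ n : ZMod (2 * M), (starRingEnd ℂ) (embed2 M f n) * embed2 M g n =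
      2 • ∑ m : ZMod M, (starRingEnd ℂ) (f m) * g m :=
    ZMod.sum_comp_val_div_two M fun m => (starRingEnd ℂ) (f m) * g m
  rw [hsum, nsmul_eq_mul]
  push_cast
  field_simp

theorem embed2_comp_add_two_mul (M k : ℕ) [NeZero M] (f : ZMod M → ℂ) :
    (fun n : ZMod (2 * M) => embed2 M f (n + ((2 * k : ℕ) : ZMod (2 * M)))) =
      embed2 M (fun m => f (m + (k : ZMod M))) :=
  funext fun n => congrArg f (ZMod.val_add_two_mul_div_two M n k)

theorem stmt8_general (M : ℕ) [NeZero M] (k : ℕ) :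
    (∀ f g : ZMod M → ℂ,
      (1 / ((2 * M : ℕ) : ℂ)) *
          ∑ n : ZMod (2 * M), (starRingEnd ℂ) (embed2 M f n) * embed2 M g n =
        (1 / (M : ℂ)) * ∑ m : ZMod M, (starRingEnd ℂ) (f m) * g m) ∧
    (∀ f : ZMod M → ℂ,
      (fun n : ZMod (2 * M) => embed2 M f (n + ((2 * k : ℕ) : ZMod (2 * M)))) =
        embed2 M (fun m => f (m + (k : ZMod M)))) :=
  ⟨embed2_inner M, embed2_comp_add_two_mul M k⟩

/-- I^{(2)}_{M→2M} is an isometry for the normalized inner products,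
and the cyclic shift operators T̂_M(l) (shift by k = Ml, resp. 2k at level 2M)
are strongly cylindrically consistent with respect to it. -/
theorem stmt8 (M : ℕ) [NeZero M] (k : ℕ) (hk : k < M) :
    (∀ f g : ZMod M → ℂ,
      (1 / ((2 * M : ℕ) : ℂ)) *
          ∑ n : ZMod (2 * M), (starRingEnd ℂ) (embed2 M f n) * embed2 M g n =
        (1 / (M : ℂ)) * ∑ m : ZMod M, (starRingEnd ℂ) (f m) * g m) ∧
    (∀ f : ZMod M → ℂ,
      (fun n : ZMod (2 * M) => embed2 M f (n + ((2 * k : ℕ) : ZMod (2 * M)))) =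
        embed2 M (fun m => f (m + (k : ZMod M)))) :=
  stmt8_general M k
end

section
/- Let φ : H_M → L²([0,1)) send e_M^m = √M δ^m to √M · χ_{[m/M,(m+1)/M)}. Then for all m, n ∈ {0,…,M−1}, ⟨φ(e_M^m), Û φ(e_M^n)⟩_{L²} = e^{2πi(m+1/2)/M} δ_{mn} sin(π/M)/(π/M), where (Ûf)(x) = e^{2πix}f(x). Hence the RG fixed-point form ^{(∞)}U_M is the pull-back of the continuum multiplication operator Û under the piecewise-constant embedding. -/
/-!
Up to the factor `M`, the integrand is `exp (2πix)` restricted to the intersection of the two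
cells `[m/M, (m+1)/M)` and `[n/M, (n+1)/M)`. Distinct cells are disjoint, which gives `δ_{mn}`.
On a single cell `[a, b)`, `∫ exp (2πix) = exp (πi(a+b)) · sin (π(b-a)) / π`: the phase is
taken at the midpoint of the cell and the modulus is a sinc of its width `1/M`.
-/

open MeasureTheory Set Complex Function

theorem pairwise_disjoint_Ico_div_natCast {K : Type*} [Field K] [LinearOrder K]
    [IsStrictOrderedRing K] {c : K} (hc : 0 ≤ c) :
    Pairwise (Disjoint on fun n : ℕ => Ico ((n : K) / c) (((n : K) + 1) / c)) := by
  have hmono : Monotone fun n : ℕ => (n : K) / c := fun _ _ h => by dsimp only; gcongr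
  simpa [Order.succ_eq_add_one] using hmono.pairwise_disjoint_on_Ico_succ

theorem intervalIntegral_indicator_Ico {E : Type*} [NormedAddCommGroup E] [NormedSpace ℝ E]
    (f : ℝ → E) {a b c d : ℝ} (hca : c ≤ a) (hab : a ≤ b) (hbd : b ≤ d) :
    ∫ x in c..d, (Ico a b).indicator f x = ∫ x in a..b, f x := by
  rw [intervalIntegral.integral_of_le (hca.trans (hab.trans hbd)),
    intervalIntegral.integral_of_le hab, ← integral_Ico_eq_integral_Ioc,
    ← integral_Ico_eq_integral_Ioc, setIntegral_indicator measurableSet_Ico, Ico_inter_Ico,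
    sup_eq_right.2 hca, inf_eq_right.2 hbd]

theorem integral_exp_two_pi_I_mul (a b : ℝ) :
    ∫ x in a..b, exp (2 * Real.pi * I * x) =
      exp (Real.pi * I * (a + b)) * ((Real.sin (Real.pi * (b - a)) / Real.pi : ℝ) : ℂ) := by
  have hπ : (Real.pi : ℂ) ≠ 0 := ofReal_ne_zero.2 Real.pi_ne_zero
  have hfactor_midpoint (s : ℂ) : exp (2 * Real.pi * I * s) =
      exp (Real.pi * I * (a + b)) * exp (Real.pi * I * (2 * s - a - b)) := by
    rw [← Complex.exp_add]; ring_nf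
  rw [integral_exp_mul_complex (by simp [hπ, I_ne_zero]), hfactor_midpoint b, hfactor_midpoint a, ofReal_div,
    ofReal_sin, ← mul_sub, mul_div_assoc]
  congr 1
  push_cast
  rw [Complex.sin]
  field_simp
  rw [I_sq]
  ring_nf

theorem conj_mul_indicator_one_mul {α : Type*} (s t : Set α) (r : ℝ) (g : α → ℂ) (x : α) :
    (starRingEnd ℂ) ((r : ℂ) * s.indicator (fun _ => 1) x) *
        (g x * ((r : ℂ) * t.indicator (fun _ => 1) x)) =
      (s ∩ t).indicator (fun y => ((r ^ 2 : ℝ) : ℂ) * g y) x := by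
  by_cases hs : x ∈ s <;> by_cases ht : x ∈ t <;> simp [hs, ht]
  ring

theorem stmt13_general (M : ℕ) (hM : 0 < M) (m n : ℕ) (hm : m < M) :
    (∫ x in (0 : ℝ)..1,
        (starRingEnd ℂ)
            ((Real.sqrt M : ℂ) *
              Set.indicator (Set.Ico ((m : ℝ) / M) (((m : ℝ) + 1) / M)) (fun _ => (1 : ℂ)) x) *
          (Complex.exp (2 * Real.pi * Complex.I * x) *
            ((Real.sqrt M : ℂ) *
              Set.indicator (Set.Ico ((n : ℝ) / M) (((n : ℝ) + 1) / M)) (fun _ => (1 : ℂ)) x))) =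
      Complex.exp (2 * Real.pi * Complex.I * ((m : ℂ) + 1 / 2) / M) *
        (if m = n then 1 else 0) * ((Real.sin (Real.pi / M) / (Real.pi / M) : ℝ) : ℂ) := by
  have hMR : (0 : ℝ) < M := Nat.cast_pos.2 hM
  simp_rw [conj_mul_indicator_one_mul _ _ _ (fun y : ℝ => cexp (2 * Real.pi * I * y)),
    Real.sq_sqrt hMR.le]
  split_ifs with hmn
  · subst hmn
    have hcell_le_one : ((m : ℝ) + 1) / M ≤ 1 := by
      rw [div_le_one hMR]; exact_mod_cast hm
    rw [inter_self, intervalIntegral_indicator_Ico _ (by positivity) (by gcongr; linarith)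
        hcell_le_one, intervalIntegral.integral_const_mul, integral_exp_two_pi_I_mul]
    have hmidpoint : (Real.pi * I * (((m / M : ℝ) : ℂ) + (((m + 1) / M : ℝ) : ℂ))) =
        2 * Real.pi * I * ((m : ℂ) + 1 / 2) / M := by
      push_cast; ring
    have hwidth : Real.pi * (((m : ℝ) + 1) / M - m / M) = Real.pi / M := by ring
    rw [hmidpoint, hwidth]
    push_cast
    field_simp
  · rw [(pairwise_disjoint_Ico_div_natCast hMR.le hmn).inter_eq, indicator_empty]
    simp

/-- For the embedding φ(e_M^m) = √M χ_{[m/M,(m+1)/M)} into L²([0,1)),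
the matrix elements of the continuum multiplication operator (Ûf)(x) = e^{2πix}f(x)
reproduce the RG fixed-point kernel:
⟨φ(e_M^m), Û φ(e_M^n)⟩ = e^{2πi(m+1/2)/M} δ_{mn} sin(π/M)/(π/M). -/
theorem stmt13 (M : ℕ) (hM : 0 < M) (m n : ℕ) (hm : m < M) (hn : n < M) :
    (∫ x in (0 : ℝ)..1,
        (starRingEnd ℂ)
            ((Real.sqrt M : ℂ) *
              Set.indicator (Set.Ico ((m : ℝ) / M) (((m : ℝ) + 1) / M)) (fun _ => (1 : ℂ)) x) *
          (Complex.exp (2 * Real.pi * Complex.I * x) *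
            ((Real.sqrt M : ℂ) *
              Set.indicator (Set.Ico ((n : ℝ) / M) (((n : ℝ) + 1) / M)) (fun _ => (1 : ℂ)) x))) =
      Complex.exp (2 * Real.pi * Complex.I * ((m : ℂ) + 1 / 2) / M) *
        (if m = n then 1 else 0) * ((Real.sin (Real.pi / M) / (Real.pi / M) : ℝ) : ℂ) :=
  stmt13_general M hM m n hm
end
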